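/- Let ν₁ and ν₂ be Borel probability measures on ℝ with supports bounded from above. If ν₁ ≻ ν₂, meaning ∫ h dν₁ ≥ ∫ h dν₂ for every bounded increasing function h : ℝ → ℝ, then P(ν₁)(t) ≥ P(ν₂)(t) for all t ∈ [0,1). -/

import Mathlib

/-!
Testing the stochastic order against the indicators of the half-lines `(x, ∞)` shows that the
survival function of `ν₂` lies below that of `ν₁`. Hence every level set `{x | t < ν₂ (x, ∞)}`
is contained in the corresponding one for `ν₁`, so `F_{ν₂}* ≤ F_{ν₁}*` on `[0, 1)`, and the
inequality integrates to `P(ν₂) ≤ P(ν₁)`. Bounded support makes these suprema finite, and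
monotonicity of `F*` makes it integrable on `(0, t]`.
-/

open MeasureTheory Set Filter

/-- The stochastic order `ν₁ ≻ ν₂` on Borel measures on `ℝ`:
`∫ h dν₂ ≤ ∫ h dν₁` for every bounded increasing function `h`.
`StochLE ν₂ ν₁` means `ν₂ ≺ ν₁`. -/
def StochLE (ν₂ ν₁ : Measure ℝ) : Prop :=
  ∀ h : ℝ → ℝ, Monotone h → (∃ C : ℝ, ∀ x, |h x| ≤ C) →
    ∫ x, h x ∂ν₂ ≤ ∫ x, h x ∂ν₁

noncomputable def Fstar (ν : Measure ℝ) (t : ℝ) : ℝ :=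
  sSup {x : ℝ | t < (ν (Ioi x)).toReal}

/-- `P(ν)(t) = ∫₀ᵗ F_ν*(s) ds`. -/
noncomputable def Pfun (ν : Measure ℝ) (t : ℝ) : ℝ :=
  ∫ s in Ioc (0:ℝ) t, Fstar ν s

/-- The maximal value of the polygon `P(ν)` over `[0,1]`
    (taken as the supremum over `t ∈ [0,1)`). -/
noncomputable def Pmax (ν : Measure ℝ) : ℝ :=
  ⨆ t ∈ Ico (0:ℝ) 1, Pfun ν t

open Topology

lemma monotone_indicator_one_Ioi {α : Type*} [Preorder α] (x : α) :
    Monotone ((Ioi x).indicator (1 : α → ℝ)) := by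
  intro a b hab
  by_cases ha : a ∈ Ioi x
  · simp [indicator_of_mem ha, indicator_of_mem (mem_Ioi.2 (ha.trans_le hab))]
  · rw [indicator_of_notMem ha]
    exact indicator_nonneg (fun _ _ => zero_le_one) b

lemma StochLE.measure_Ioi_toReal_le {ν₁ ν₂ : Measure ℝ} (hord : StochLE ν₂ ν₁) (x : ℝ) :
    (ν₂ (Ioi x)).toReal ≤ (ν₁ (Ioi x)).toReal := by
  have hbdd : ∃ C : ℝ, ∀ y, |(Ioi x).indicator (1 : ℝ → ℝ) y| ≤ C :=
    ⟨1, fun y => by by_cases hy : y ∈ Ioi x <;> simp [hy]⟩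
  simpa only [integral_indicator_one measurableSet_Ioi, measureReal_def] using
    hord _ (monotone_indicator_one_Ioi x) hbdd

lemma bddAbove_setOf_lt_measure_Ioi {ν : Measure ℝ} {M s : ℝ} (hM : ν (Ioi M) = 0)
    (hs : 0 ≤ s) : BddAbove {x : ℝ | s < (ν (Ioi x)).toReal} := by
  refine ⟨M, fun x (hx : s < _) => not_lt.1 fun hMx => hx.not_ge ?_⟩
  rwa [measure_mono_null (Ioi_subset_Ioi hMx.le) hM, ENNReal.toReal_zero]

lemma nonempty_setOf_lt_measure_Ioi (ν : Measure ℝ) [IsProbabilityMeasure ν] {s : ℝ}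
    (hs : s < 1) : {x : ℝ | s < (ν (Ioi x)).toReal}.Nonempty := by
  have hlim : Tendsto (fun x => (ν (Ici x)).toReal) atBot (𝓝 1) := by
    simpa [Function.comp_def] using
      (ENNReal.tendsto_toReal ENNReal.one_ne_top).comp (measure_univ (μ := ν) ▸
        tendsto_measure_Ici_atBot ν)
  obtain ⟨x, hx⟩ := (hlim.eventually_const_lt hs).exists
  refine ⟨x - 1, hx.trans_le (ENNReal.toReal_mono (measure_ne_top ν _) (measure_mono ?_))⟩
  exact Ici_subset_Ioi.2 (sub_one_lt x)

lemma Fstar_le_Fstar {ν₁ ν₂ : Measure ℝ} [IsProbabilityMeasure ν₂] {M : ℝ}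
    (hM : ν₁ (Ioi M) = 0) (hsurv : ∀ x, (ν₂ (Ioi x)).toReal ≤ (ν₁ (Ioi x)).toReal)
    {s s' : ℝ} (hs : 0 ≤ s) (hss' : s ≤ s') (hs' : s' < 1) :
    Fstar ν₂ s' ≤ Fstar ν₁ s :=
  csSup_le_csSup (bddAbove_setOf_lt_measure_Ioi hM hs) (nonempty_setOf_lt_measure_Ioi ν₂ hs')
    fun x hx => hss'.trans_lt (hx.trans_le (hsurv x))

lemma antitoneOn_Fstar {ν : Measure ℝ} [IsProbabilityMeasure ν] {M : ℝ} (hM : ν (Ioi M) = 0) :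
    AntitoneOn (Fstar ν) (Ico 0 1) :=
  fun _ hs _ hs' hss' => Fstar_le_Fstar hM (fun _ => le_rfl) hs.1 hss' hs'.2

lemma integrableOn_Fstar {ν : Measure ℝ} [IsProbabilityMeasure ν] {M t : ℝ}
    (hM : ν (Ioi M) = 0) (ht : t < 1) : IntegrableOn (Fstar ν) (Ioc 0 t) :=
  (((antitoneOn_Fstar hM).mono (Icc_subset_Ico_right ht)).integrableOn_isCompact
    isCompact_Icc).mono_set Ioc_subset_Icc_self

/-- If `ν₁ ≻ ν₂` (stochastic order) for probability measures with supports bounded from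
above, then `P(ν₁) ≥ P(ν₂)` on `[0,1)`. -/
theorem stmt4 (ν₁ ν₂ : Measure ℝ) [IsProbabilityMeasure ν₁] [IsProbabilityMeasure ν₂]
    (h₁ : ∃ M : ℝ, ν₁ (Ioi M) = 0) (h₂ : ∃ M : ℝ, ν₂ (Ioi M) = 0)
    (hord : StochLE ν₂ ν₁) :
    ∀ t ∈ Ico (0:ℝ) 1, Pfun ν₂ t ≤ Pfun ν₁ t := by
  rintro t ⟨-, ht⟩
  obtain ⟨M₁, hM₁⟩ := h₁
  obtain ⟨M₂, hM₂⟩ := h₂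
  exact setIntegral_mono_on (integrableOn_Fstar hM₂ ht) (integrableOn_Fstar hM₁ ht)
    measurableSet_Ioc fun s hs =>
      Fstar_le_Fstar hM₁ hord.measure_Ioi_toReal_le hs.1.le le_rfl (hs.2.trans_lt ht)
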